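/- Let G be a finite connected simple graph, let ρ be a rotation system for G, and suppose there is a vertex v such that γ(v) = v for every γ ∈ Γ_ρ(G). Then the map-automorphism group Γ_ρ(G) is a cyclic group, and every element of Γ_ρ(G) restricts to N(v) as a regular permutation, i.e., all of its cycles on N(v) (counting fixed points as 1-cycles) have one common length, which divides degree(v); in particular a generator of Γ_ρ(G) restricts to N(v) as a d-regular permutation for some divisor d of degree(v). -/

import Mathlib

/-- A rotation system for a simple graph `G`. -/
def IsRotationSystem {V : Type*} (G : SimpleGraph V) (ρ : V → Equiv.Perm V) : Prop :=
  ∀ v : V, (ρ v).IsCycleOn (G.neighborSet v) ∧ ∀ w : V, w ∉ G.neighborSet v → ρ v w = w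

/-- The action of a permutation `γ` on rotation systems: `(γ·ρ)_{γ(v)} = γ ∘ ρ_v ∘ γ⁻¹`. -/
def rotAct {V : Type*} (γ : Equiv.Perm V) (ρ : V → Equiv.Perm V) : V → Equiv.Perm V :=
  fun w => γ * ρ (γ⁻¹ w) * γ⁻¹

/-- The automorphism group `Γ(G)` of a simple graph, as a set of permutations. -/
def autSet {V : Type*} (G : SimpleGraph V) : Set (Equiv.Perm V) :=
  {γ | ∀ u w : V, G.Adj (γ u) (γ w) ↔ G.Adj u w}

/-- The length of the orbit of `w` under the cyclic group generated by `γ`. -/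
noncomputable def orbitLen {V : Type*} (γ : Equiv.Perm V) (w : V) : ℕ :=
  ({y | ∃ k : ℕ, (γ ^ k) w = y}).ncard

/-!
A map automorphism fixing a vertex `u` commutes with the rotation `ρ u`, a cycle on `N(u)`; so if
it also fixes one neighbour of `u`, it fixes all of `N(u)`. Propagating this along the edges of the
connected graph, an element of `Γ_ρ(G)` fixing a neighbour of `v` is the identity. Hence restriction
to `N(v)` embeds `Γ_ρ(G)` into the centraliser of the full cycle `ρ v` on `N(v)`, which is the cyclic
group of order `deg v` it generates; and since no nontrivial element fixes a neighbour of `v`, every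
cycle of `γ` on `N(v)` has length `orderOf γ`.
-/

open Equiv Equiv.Perm Function Set

namespace Equiv.Perm

variable {α : Type*} {c γ δ : Perm α}

theorem IsCycleOn.eqOn_of_commute {s : Set α} {a : α} (hc : c.IsCycleOn s)
    (hγ : Commute γ c) (hδ : Commute δ c) (ha : a ∈ s) (h : γ a = δ a) : EqOn γ δ s := by
  intro x hx
  obtain ⟨i, rfl⟩ := hc.2 ha hx
  change (γ * c ^ i) a = (δ * c ^ i) a
  rw [(hγ.zpow_right i).eq, (hδ.zpow_right i).eq, mul_apply, mul_apply, h]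

theorem IsCycleOn.mem_zpowers_of_commute (hc : c.IsCycleOn univ) (hγ : Commute γ c) :
    γ ∈ Subgroup.zpowers c := by
  cases isEmpty_or_nonempty α with
  | inl _ => exact Subsingleton.elim (1 : Perm α) γ ▸ one_mem _
  | inr hne =>
    obtain ⟨a⟩ := hne
    obtain ⟨j, hj⟩ := hc.2 (mem_univ a) (mem_univ (γ a))
    refine ⟨j, Perm.ext fun x => ?_⟩
    exact hc.eqOn_of_commute ((Commute.refl c).zpow_left j) hγ (mem_univ a) hj (mem_univ x)

theorem IsCycleOn.orderOf_dvd_natCard [Finite α] (hc : c.IsCycleOn univ) :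
    orderOf c ∣ Nat.card α := by
  have := Fintype.ofFinite α
  have hc' : c.IsCycleOn (Finset.univ : Finset α) := by rwa [Finset.coe_univ]
  refine orderOf_dvd_of_pow_eq_one (Perm.ext fun a => ?_)
  rw [Nat.card_eq_fintype_card, ← Finset.card_univ]
  exact (hc'.pow_apply_eq (Finset.mem_univ a)).2 dvd_rfl

theorem minimalPeriod_eq_orderOf [Finite α] {w : α}
    (hfree : ∀ k : ℕ, (γ ^ k) w = w → γ ^ k = 1) : minimalPeriod γ w = orderOf γ := by
  refine Nat.dvd_antisymm (IsPeriodicPt.minimalPeriod_dvd ?_) (orderOf_dvd_of_pow_eq_one ?_)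
  · rw [IsPeriodicPt, IsFixedPt, iterate_eq_pow, pow_orderOf_eq_one, one_apply]
  · exact hfree _ (by rw [← iterate_eq_pow]; exact isPeriodicPt_minimalPeriod γ w)

end Equiv.Perm

theorem orbitLen_eq_minimalPeriod {α : Type*} [Finite α] (γ : Perm α) (w : α) :
    orbitLen γ w = minimalPeriod γ w := by
  have hper := γ.injective.mem_periodicPts w
  have horbit : {y | ∃ k : ℕ, (γ ^ k) w = y} = (fun k => γ^[k] w) '' Iio (minimalPeriod γ w) := by
    ext y
    simp only [mem_ofPred_eq, mem_image, mem_Iio, ← iterate_eq_pow]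
    refine ⟨?_, fun ⟨k, _, hk⟩ => ⟨k, hk⟩⟩
    rintro ⟨k, rfl⟩
    exact ⟨k % minimalPeriod γ w, Nat.mod_lt _ (minimalPeriod_pos_of_mem_periodicPts hper),
      iterate_mod_minimalPeriod_eq⟩
  rw [orbitLen, horbit, iterate_injOn_Iio_minimalPeriod.ncard_image, ncard_Iio_nat]

def Subgroup.restrictPerm {α : Type*} (H : Subgroup (Perm α)) {s : Set α}
    (hs : ∀ γ ∈ H, ∀ x, γ x ∈ s ↔ x ∈ s) : H →* Perm s where
  toFun γ := (γ : Perm α).subtypePerm (hs γ γ.2)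
  map_one' := rfl
  map_mul' _ _ := rfl

section MapAutomorphismGroup

variable {V : Type*} {G : SimpleGraph V} {ρ : V → Perm V} {γ δ : Perm V} {v w : V}

theorem rotAct_one (ρ : V → Perm V) : rotAct 1 ρ = ρ := by
  funext u; simp [rotAct]

theorem rotAct_mul (γ δ : Perm V) (ρ : V → Perm V) :
    rotAct (γ * δ) ρ = rotAct γ (rotAct δ ρ) := by
  funext u; simp [rotAct, mul_assoc]

theorem mul_mem_autSet (hγ : γ ∈ autSet G) (hδ : δ ∈ autSet G) : γ * δ ∈ autSet G :=
  fun u w => (hγ (δ u) (δ w)).trans (hδ u w)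

theorem inv_mem_autSet (hγ : γ ∈ autSet G) : γ⁻¹ ∈ autSet G :=
  fun u w => by simpa using (hγ (γ⁻¹ u) (γ⁻¹ w)).symm

variable (G ρ) in
def mapAutGroup : Subgroup (Perm V) where
  carrier := {γ ∈ autSet G | rotAct γ ρ = ρ}
  one_mem' := ⟨fun _ _ => Iff.rfl, rotAct_one ρ⟩
  mul_mem' hγ hδ := ⟨mul_mem_autSet hγ.1 hδ.1, by rw [rotAct_mul, hδ.2, hγ.2]⟩
  inv_mem' {γ} hγ := ⟨inv_mem_autSet hγ.1, by
    conv_lhs => rw [← hγ.2]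
    rw [← rotAct_mul, inv_mul_cancel, rotAct_one]⟩

theorem apply_mem_neighborSet_iff (hγ : γ ∈ autSet G) (hv : γ v = v) (x : V) :
    γ x ∈ G.neighborSet v ↔ x ∈ G.neighborSet v := by
  conv_lhs => rw [← hv]
  exact hγ v x

theorem commute_of_rotAct_eq_self (hγ : rotAct γ ρ = ρ) (hv : γ v = v) : Commute γ (ρ v) := by
  have h := congrFun hγ v
  rw [rotAct, inv_eq_iff_eq.2 hv.symm] at h
  exact mul_inv_eq_iff_eq_mul.1 h

theorem eq_one_of_forall_mem_neighborSet (hG : G.Connected) (hρ : IsRotationSystem G ρ)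
    (hγ : rotAct γ ρ = ρ) (hv : γ v = v) (hN : ∀ x ∈ G.neighborSet v, γ x = x) : γ = 1 := by
  let Rigid (u : V) : Prop := γ u = u ∧ ∀ x ∈ G.neighborSet u, γ x = x
  have step {u x : V} (hux : G.Adj u x) (hu : Rigid u) : Rigid x :=
    have hx : γ x = x := hu.2 x hux
    ⟨hx, (hρ x).1.eqOn_of_commute (commute_of_rotAct_eq_self hγ hx) (Commute.one_left _)
      hux.symm hu.1⟩
  have walk {u x : V} (p : G.Walk u x) : Rigid u → Rigid x := by
    induction p with
    | nil => exact id
    | cons hadj _ ih => exact ih ∘ step hadj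
  exact Perm.ext fun u => (walk (hG.preconnected v u).some ⟨hv, hN⟩).1

theorem eq_one_of_apply_eq_self_of_mem_neighborSet (hG : G.Connected)
    (hρ : IsRotationSystem G ρ) (hγ : rotAct γ ρ = ρ) (hv : γ v = v)
    (hw : w ∈ G.neighborSet v) (hγw : γ w = w) : γ = 1 :=
  eq_one_of_forall_mem_neighborSet hG hρ hγ hv fun _ hx =>
    (hρ v).1.eqOn_of_commute (commute_of_rotAct_eq_self hγ hv) (Commute.one_left _) hw hγw hx

theorem exists_injective_mapAutGroup_zpowers (hG : G.Connected) (hρ : IsRotationSystem G ρ)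
    (hv : ∀ γ ∈ mapAutGroup G ρ, γ v = v) :
    ∃ f : mapAutGroup G ρ →*
      Subgroup.zpowers ((ρ v).subtypePerm fun _ => (hρ v).1.apply_mem_iff), Injective f := by
  let φ := (mapAutGroup G ρ).restrictPerm fun γ hγ => apply_mem_neighborSet_iff hγ.1 (hv γ hγ)
  let c : Perm (G.neighborSet v) := (ρ v).subtypePerm fun _ => (hρ v).1.apply_mem_iff
  have hcomm (γ : mapAutGroup G ρ) : Commute (φ γ) c :=
    Perm.ext fun x => Subtype.ext <|
      Perm.congr_fun (commute_of_rotAct_eq_self γ.2.2 (hv γ γ.2)).eq x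
  refine ⟨φ.codRestrict _ fun γ => (hρ v).1.subtypePerm.mem_zpowers_of_commute (hcomm γ), ?_⟩
  refine (injective_iff_map_eq_one _).2 fun γ hγ => Subtype.ext ?_
  exact eq_one_of_forall_mem_neighborSet hG hρ γ.2.2 (hv γ γ.2) fun x hx =>
    congrArg Subtype.val (Perm.congr_fun (congrArg Subtype.val hγ) ⟨x, hx⟩)

theorem isCyclic_mapAutGroup (hG : G.Connected) (hρ : IsRotationSystem G ρ)
    (hv : ∀ γ ∈ mapAutGroup G ρ, γ v = v) : IsCyclic (mapAutGroup G ρ) :=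
  have ⟨f, hf⟩ := exists_injective_mapAutGroup_zpowers hG hρ hv
  isCyclic_of_injective f hf

theorem natCard_mapAutGroup_dvd [Finite V] (hG : G.Connected) (hρ : IsRotationSystem G ρ)
    (hv : ∀ γ ∈ mapAutGroup G ρ, γ v = v) :
    Nat.card (mapAutGroup G ρ) ∣ (G.neighborSet v).ncard := by
  obtain ⟨f, hf⟩ := exists_injective_mapAutGroup_zpowers hG hρ hv
  calc Nat.card (mapAutGroup G ρ)
      ∣ Nat.card (Subgroup.zpowers ((ρ v).subtypePerm _)) := Subgroup.card_dvd_of_injective f hf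
    _ = orderOf ((ρ v).subtypePerm _) := Nat.card_zpowers _
    _ ∣ Nat.card (G.neighborSet v) := (hρ v).1.subtypePerm.orderOf_dvd_natCard
    _ = (G.neighborSet v).ncard := Nat.card_coe_set_eq _

theorem orbitLen_eq_orderOf_of_mem_mapAutGroup [Finite V] (hG : G.Connected)
    (hρ : IsRotationSystem G ρ) (hv : ∀ γ ∈ mapAutGroup G ρ, γ v = v)
    (hγ : γ ∈ mapAutGroup G ρ) (hw : w ∈ G.neighborSet v) : orbitLen γ w = orderOf γ := by
  rw [orbitLen_eq_minimalPeriod, minimalPeriod_eq_orderOf]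
  intro k hk
  have hγk := pow_mem hγ k
  exact eq_one_of_apply_eq_self_of_mem_neighborSet hG hρ hγk.2 (hv _ hγk) hw hk

end MapAutomorphismGroup

theorem map_automorphism_group_cyclic_of_fixed_vertex_general {V : Type*} [Fintype V]
    (G : SimpleGraph V) (hG : G.Connected)
    (ρ : V → Equiv.Perm V) (hρ : IsRotationSystem G ρ) (v : V)
    (hv : ∀ γ ∈ {γ ∈ autSet G | rotAct γ ρ = ρ}, γ v = v) :
    (∃ γ₀ ∈ {γ ∈ autSet G | rotAct γ ρ = ρ},
        ∀ γ ∈ {γ ∈ autSet G | rotAct γ ρ = ρ}, ∃ k : ℕ, γ = γ₀ ^ k) ∧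
      (∀ γ ∈ {γ ∈ autSet G | rotAct γ ρ = ρ},
        ∃ d : ℕ, d ∣ (G.neighborSet v).ncard ∧ ∀ w ∈ G.neighborSet v, orbitLen γ w = d) := by
  have := isCyclic_mapAutGroup hG hρ hv
  refine ⟨?_, fun γ hγ => ⟨orderOf γ, ?_, fun w hw =>
    orbitLen_eq_orderOf_of_mem_mapAutGroup hG hρ hv hγ hw⟩⟩
  · obtain ⟨γ₀, hγ₀⟩ := IsCyclic.exists_monoid_generator (α := mapAutGroup G ρ)
    refine ⟨γ₀, γ₀.2, fun γ hγ => ?_⟩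
    obtain ⟨k, hk⟩ := hγ₀ ⟨γ, hγ⟩
    exact ⟨k, congrArg Subtype.val hk.symm⟩
  · calc orderOf γ = orderOf (⟨γ, hγ⟩ : mapAutGroup G ρ) := (Subgroup.orderOf_mk γ hγ).symm
      _ ∣ Nat.card (mapAutGroup G ρ) := orderOf_dvd_natCard _
      _ ∣ (G.neighborSet v).ncard := natCard_mapAutGroup_dvd hG hρ hv

/-- Theorem: if every member of the map-automorphism group `Γ_ρ(G)` of a connected graph fixes
the same vertex `v`, then `Γ_ρ(G)` is cyclic, and every member of `Γ_ρ(G)` restricts to the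
neighborhood `N(v)` as a `d`-regular permutation for some divisor `d` of `degree(v)`
(in particular this holds for a generator). -/
theorem map_automorphism_group_cyclic_of_fixed_vertex {V : Type*} [Fintype V] [DecidableEq V]
    (G : SimpleGraph V) (hG : G.Connected)
    (ρ : V → Equiv.Perm V) (hρ : IsRotationSystem G ρ) (v : V)
    (hv : ∀ γ ∈ {γ ∈ autSet G | rotAct γ ρ = ρ}, γ v = v) :
    (∃ γ₀ ∈ {γ ∈ autSet G | rotAct γ ρ = ρ},
        ∀ γ ∈ {γ ∈ autSet G | rotAct γ ρ = ρ}, ∃ k : ℕ, γ = γ₀ ^ k) ∧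
      (∀ γ ∈ {γ ∈ autSet G | rotAct γ ρ = ρ},
        ∃ d : ℕ, d ∣ (G.neighborSet v).ncard ∧ ∀ w ∈ G.neighborSet v, orbitLen γ w = d) :=
  map_automorphism_group_cyclic_of_fixed_vertex_general G hG ρ hρ v hv
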